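/- arXiv:2110.14858 — 4 statements merged into one kernel-verified Lean document; each statement's English description precedes it below -/
import Mathlib

section
/- Let Σ = {a_1 < a_2 < ⋯ < a_s} be an ordered alphabet and [w] a circular word over Σ. Let v_1, …, v_{(s−1)!} be arbitrary representatives, one from each of the (s−1)! conjugacy classes into which the s! slender Parikh words of length s over Σ are partitioned. Then the sum over i = 1, …, (s−1)! of the direct subword count of v_i in [w] equals ∏_{i=1}^{s} |w|_{a_i}. -/
/-- The number of occurrences of `v` as a scattered subword (subsequence) of `w`:
the number of strictly increasing sequences of positions in `w` spelling out `v`. -/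
def subwordCount {α : Type*} [DecidableEq α] (w v : List α) : ℕ :=
  w.sublists.count v

/-- The conjugacy class (circular word) `[w]` of `w`: the set of all cyclic shifts of `w`. -/
def conjClass {α : Type*} [DecidableEq α] (w : List α) : Finset (List α) :=
  insert w ((Finset.range w.length).image w.rotate)

/-- The average subword count of `v` in the circular word `[w]`:
`|[w]|_v = (1/|[w]|) ∑_{u ∈ [w]} |u|_v`. -/
def circCount {α : Type*} [DecidableEq α] (w v : List α) : ℚ :=
  (∑ u ∈ conjClass w, (subwordCount u v : ℚ)) / ((conjClass w).card : ℚ)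

/-- The Parikh matrix of the letter `q` of the ordered alphabet `Fin s`:
the identity matrix with an extra `1` in entry `(q, q+1)`. -/
def parikhLetter {s : ℕ} (q : Fin s) : Matrix (Fin (s + 1)) (Fin (s + 1)) ℚ :=
  1 + Matrix.single q.castSucc q.succ 1

/-- The Parikh matrix mapping over the ordered alphabet `Fin s` (a monoid morphism). -/
def parikhMatrix {s : ℕ} (w : List (Fin s)) : Matrix (Fin (s + 1)) (Fin (s + 1)) ℚ :=
  (w.map parikhLetter).prod

/-- The Parikh matrix of the circular word `[w]`:
`Ψ([w]) = (1/|[w]|) ∑_{u ∈ [w]} Ψ(u)`. -/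
def circParikh {s : ℕ} (w : List (Fin s)) : Matrix (Fin (s + 1)) (Fin (s + 1)) ℚ :=
  (((conjClass w).card : ℚ))⁻¹ • ∑ u ∈ conjClass w, parikhMatrix u

/-- The alternate matrix: `(i,j)` entry is `(-1)^(i+j)` times the `(i,j)` entry of `A`. -/
def altMatrix {n : ℕ} (A : Matrix (Fin n) (Fin n) ℚ) : Matrix (Fin n) (Fin n) ℚ :=
  Matrix.of fun i j => (-1 : ℚ) ^ (i.val + j.val) * A i j

/-- The word `a_i a_{i+1} ⋯ a_j` over the ordered alphabet `Fin s`. -/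
def segWord {s : ℕ} (i j : Fin s) : List (Fin s) :=
  (List.range (j.val - i.val + 1)).attach.map fun t =>
    ⟨i.val + t.1, by
      have ht := List.mem_range.mp t.2
      have hi := i.isLt
      have hj := j.isLt
      omega⟩

/-!
Every slender Parikh word of length `s` over `Fin s` is a permutation of the alphabet, and the
classes `[v]`, `v ∈ V`, partition the set of these `s!` words. So the sum counts the subsequences
of `w` that use every letter exactly once; choosing such a subsequence amounts to choosing one
position of `w` for each letter independently, which gives `∏ i, |w|_{a_i}`.
-/

open List Finset

section

variable {α : Type*} [DecidableEq α]

theorem mem_conjClass_iff {v u : List α} : u ∈ conjClass v ↔ v ~r u := by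
  rcases eq_or_ne v [] with rfl | hv
  · simp [conjClass, eq_comm]
  constructor
  · intro h
    rcases Finset.mem_insert.mp h with rfl | h
    · exact IsRotated.refl _
    · obtain ⟨n, -, rfl⟩ := Finset.mem_image.mp h
      exact ⟨n, rfl⟩
  · rintro ⟨n, rfl⟩
    exact Finset.mem_insert_of_mem <| Finset.mem_image.mpr
      ⟨n % v.length, Finset.mem_range.mpr (Nat.mod_lt _ (length_pos_iff.mpr hv)),
        rotate_mod v n⟩

theorem disjoint_conjClass {v v' : List α} (h : v' ∉ conjClass v) :
    Disjoint (conjClass v) (conjClass v') :=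
  Finset.disjoint_left.mpr fun _ hu hu' =>
    h (mem_conjClass_iff.mpr ((mem_conjClass_iff.mp hu).trans (mem_conjClass_iff.mp hu').symm))

theorem List.sum_count_eq_countP {β : Type*} [BEq β] [LawfulBEq β] (l : List β) (T : Finset β)
    (p : β → Prop) [DecidablePred p] (hT : ∀ x, x ∈ T ↔ p x) :
    ∑ x ∈ T, l.count x = l.countP p := by
  classical
  induction l with
  | nil => simp
  | cons a l ih =>
    simp [count_cons, countP_cons, Finset.sum_add_distrib, ih, hT]

theorem nodup_cons_and_toFinset_eq_iff {a : α} {u : List α} {S : Finset α} :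
    ((a :: u).Nodup ∧ (a :: u).toFinset = S) ↔
      a ∈ S ∧ u.Nodup ∧ u.toFinset = S.erase a := by
  constructor
  · rintro ⟨hnd, rfl⟩
    obtain ⟨ha, hu⟩ := nodup_cons.mp hnd
    simp [hu, ha]
  · rintro ⟨ha, hu, hS⟩
    have hau : a ∉ u := by simp [← mem_toFinset, hS]
    refine ⟨nodup_cons.mpr ⟨hau, hu⟩, ?_⟩
    rw [toFinset_cons, hS, Finset.insert_erase ha]

theorem countP_sublists'_nodup_toFinset_eq (t : List α) (S : Finset α) :
    t.sublists'.countP (fun u => u.Nodup ∧ u.toFinset = S) = ∏ i ∈ S, t.count i := by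
  induction t generalizing S with
  | nil =>
    rcases S.eq_empty_or_nonempty with rfl | ⟨a, ha⟩
    · simp
    · rw [Finset.prod_eq_zero ha (count_nil ..)]
      simp [S.nonempty_iff_ne_empty.mp ⟨a, ha⟩, eq_comm]
  | cons a t ih =>
    have hcons : t.sublists'.countP (fun u => (a :: u).Nodup ∧ (a :: u).toFinset = S) =
        if a ∈ S then ∏ i ∈ S.erase a, t.count i else 0 := by
      simp_rw [nodup_cons_and_toFinset_eq_iff]
      split_ifs with ha
      · simpa [ha] using ih (S.erase a)
      · simp [ha]
    rw [sublists'_cons, countP_append, countP_map, Function.comp_def, hcons, ih S]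
    split_ifs with ha
    · rw [← Finset.mul_prod_erase S _ ha,
        ← Finset.mul_prod_erase S (fun i => (a :: t).count i) ha,
        count_cons_self,
        Finset.prod_congr rfl fun i hi => count_cons_of_ne (Finset.ne_of_mem_erase hi).symm]
      ring
    · rw [add_zero]
      exact Finset.prod_congr rfl fun i hi =>
        (count_cons_of_ne (ne_of_mem_of_not_mem hi ha).symm).symm

theorem sum_subwordCount_eq_prod_count (w : List α) (S : Finset α) (T : Finset (List α))
    (hT : ∀ u, u ∈ T ↔ u.Nodup ∧ u.toFinset = S) :
    ∑ u ∈ T, subwordCount w u = ∏ i ∈ S, w.count i := by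
  simp only [subwordCount, (sublists_perm_sublists' w).count_eq]
  rw [List.sum_count_eq_countP _ T _ hT, countP_sublists'_nodup_toFinset_eq]

theorem subwordCount_singleton (w : List α) (a : α) : subwordCount w [a] = w.count a := by
  simpa using sum_subwordCount_eq_prod_count w {a} {[a]} fun u => by
    rw [Finset.mem_singleton]
    refine ⟨by rintro rfl; simp, fun ⟨hu, hS⟩ => ?_⟩
    rw [← perm_singleton, ← hu.dedup]
    exact (toFinset_eq_iff_perm_dedup (l' := [a])).mp (by simpa using hS)

theorem nodup_and_toFinset_eq_univ_iff [Fintype α] {u : List α} :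
    (u.Nodup ∧ u.toFinset = Finset.univ) ↔
      u.length = Fintype.card α ∧ ∀ i, u.count i ≤ 1 := by
  rw [← nodup_iff_count_le_one, and_comm, and_congr_left_iff]
  intro hu
  rw [← toFinset_card_of_nodup hu, ← Finset.card_univ]
  exact ⟨fun h => h ▸ rfl, Finset.eq_univ_of_card _⟩

end

/-- Proposition 8: if `V` consists of representatives, one from each conjugacy class of the
slender Parikh words of length `s` over `Fin s`, then the sum over `v ∈ V` of the direct
subword counts `|[w]|_v = ∑_{u ∈ [v]} |w|_u` equals `∏ i, |w|_{a_i}`. -/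
theorem stmt_2 (s : ℕ) (w : List (Fin s)) (V : Finset (List (Fin s)))
    (hslender : ∀ v ∈ V, v.length = s ∧ ∀ i : Fin s, v.count i ≤ 1)
    (hdistinct : ∀ v ∈ V, ∀ v' ∈ V, v ≠ v' → v' ∉ conjClass v)
    (hcover : ∀ u : List (Fin s), u.length = s → (∀ i : Fin s, u.count i ≤ 1) →
      ∃ v ∈ V, u ∈ conjClass v) :
    ∑ v ∈ V, ∑ u ∈ conjClass v, subwordCount w u = ∏ i : Fin s, subwordCount w [i] := by
  have hslender_iff (u : List (Fin s)) :
      (u.length = s ∧ ∀ i, u.count i ≤ 1) ↔ u.Nodup ∧ u.toFinset = univ := by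
    simpa using (nodup_and_toFinset_eq_univ_iff (u := u)).symm
  have hmem (u : List (Fin s)) : u ∈ V.biUnion conjClass ↔ u.Nodup ∧ u.toFinset = univ := by
    rw [Finset.mem_biUnion]
    constructor
    · rintro ⟨v, hv, hu⟩
      have hrot := mem_conjClass_iff.mp hu
      obtain ⟨hnd, hv_univ⟩ := (hslender_iff v).mp (hslender v hv)
      exact ⟨hrot.nodup_iff.mp hnd, toFinset_eq_of_perm _ _ hrot.perm ▸ hv_univ⟩
    · intro hu
      obtain ⟨hlen, hcount⟩ := (hslender_iff u).mpr hu
      exact hcover u hlen hcount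
  rw [← Finset.sum_biUnion fun v hv v' hv' hne => disjoint_conjClass (hdistinct v hv v' hv' hne),
    sum_subwordCount_eq_prod_count w univ _ hmem]
  simp [subwordCount_singleton]
end

section
/- Let Σ = {a_1 < a_2 < ⋯ < a_s} be an ordered alphabet and w ∈ Σ*. The Parikh matrix M = Ψ_Σ(w) satisfies: M_{i,i} = 1 for 1 ≤ i ≤ s+1; M_{i,j} = 0 for 1 ≤ j < i ≤ s+1; and M_{i,j+1} = |w|_{a_i a_{i+1} ⋯ a_j} for 1 ≤ i ≤ j ≤ s. -/
/-! Right multiplication by the matrix of a letter `a` adds column `a` to column `a + 1`, which is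
exactly how appending `a` changes the number of occurrences of a segment `a_i ⋯ a_j`: the new
occurrences are those ending in the appended `a = a_j`, one for each occurrence of `a_i ⋯ a_{j-1}`
in the old word. An induction on `w` from the right then gives all three claims. -/

section Subwords

variable {α : Type*} [DecidableEq α]

theorem subwordCount_nil (w : List α) : subwordCount w [] = 1 := by
  induction w using List.reverseRecOn with
  | nil => rfl
  | append_singleton w a ih =>
    rw [subwordCount, List.sublists_concat, List.count_append, ← subwordCount, ih,
      List.count_eq_zero.mpr (by simp)]

theorem subwordCount_append_singleton (w u : List α) (a b : α) :
    subwordCount (w ++ [a]) (u ++ [b])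
      = subwordCount w (u ++ [b]) + if b = a then subwordCount w u else 0 := by
  rw [subwordCount, List.sublists_concat, List.count_append, ← subwordCount]
  congr 1
  split_ifs with hba
  · subst hba
    exact List.count_map_of_injective _ _ (List.append_left_injective [b]) u
  · refine List.count_eq_zero.mpr fun hmem => hba ?_
    obtain ⟨x, -, hx⟩ := List.mem_map.mp hmem
    simpa using (List.append_inj_right' hx rfl).symm

end Subwords

section SegWord

variable {s : ℕ}

theorem segWord_map_val (i j : Fin s) :
    (segWord i j).map Fin.val = (List.range (j.val - i.val + 1)).map (i.val + ·) := by
  simp only [segWord, List.map_map]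
  exact List.attach_map_val (f := (i.val + ·))

theorem segWord_self (i : Fin s) : segWord i i = [i] := by
  apply List.map_injective_iff.mpr Fin.val_injective
  simp [segWord_map_val]

theorem segWord_eq_append_singleton {i j k : Fin s} (hik : i ≤ k) (hkj : j.val = k.val + 1) :
    segWord i j = segWord i k ++ [j] := by
  apply List.map_injective_iff.mpr Fin.val_injective
  have hik' : i.val ≤ k.val := hik
  rw [List.map_append, segWord_map_val, segWord_map_val,
    show j.val - i.val + 1 = (k.val - i.val + 1) + 1 by omega, List.range_succ, List.map_append]
  simp only [List.map_cons, List.map_nil]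
  congr 2
  omega

end SegWord

section ParikhMatrix

variable {s : ℕ}

theorem parikhMatrix_append_singleton (w : List (Fin s)) (a : Fin s) :
    parikhMatrix (w ++ [a]) = parikhMatrix w * parikhLetter a := by
  simp [parikhMatrix]

theorem mul_parikhLetter_apply (M : Matrix (Fin (s + 1)) (Fin (s + 1)) ℚ) (a : Fin s)
    (i j : Fin (s + 1)) :
    (M * parikhLetter a) i j = M i j + if j = a.succ then M i a.castSucc else 0 := by
  rw [parikhLetter, Matrix.mul_add, Matrix.mul_one, Matrix.add_apply]
  split_ifs with hj
  · rw [hj, Matrix.mul_single_apply_same, mul_one]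
  · rw [Matrix.mul_single_apply_of_ne _ _ _ _ _ hj, add_zero]

theorem parikhLetter_blockTriangular (a : Fin s) : (parikhLetter a).BlockTriangular id :=
  Matrix.blockTriangular_one.add (Matrix.blockTriangular_single Fin.castSucc_lt_succ.le 1)

theorem parikhMatrix_blockTriangular (w : List (Fin s)) : (parikhMatrix w).BlockTriangular id :=
  list_prod_mem (S := Matrix.blockTriangularSubsemiring ℚ id) <| List.forall_mem_map.mpr
    fun a _ => parikhLetter_blockTriangular a

theorem parikhMatrix_apply_of_lt (w : List (Fin s)) {i j : Fin (s + 1)} (hji : j < i) :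
    parikhMatrix w i j = 0 :=
  parikhMatrix_blockTriangular w hji

theorem parikhMatrix_apply_self (w : List (Fin s)) (i : Fin (s + 1)) :
    parikhMatrix w i i = 1 := by
  induction w using List.reverseRecOn with
  | nil => simp [parikhMatrix]
  | append_singleton w a ih =>
    rw [parikhMatrix_append_singleton, mul_parikhLetter_apply, ih]
    split_ifs with hi
    · rw [hi, parikhMatrix_apply_of_lt w Fin.castSucc_lt_succ, add_zero]
    · rw [add_zero]

theorem parikhMatrix_castSucc_succ (w : List (Fin s)) {i j : Fin s} (hij : i ≤ j) :
    parikhMatrix w i.castSucc j.succ = subwordCount w (segWord i j) := by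
  induction w using List.reverseRecOn generalizing i j with
  | nil =>
    have hne : i.castSucc ≠ j.succ := (Fin.castSucc_lt_succ_iff.mpr hij).ne
    have hseg : segWord i j ≠ [] := by simp [segWord]
    simp [parikhMatrix, Matrix.one_apply_ne hne, subwordCount, hseg]
  | append_singleton w a ih =>
    -- the entry just left of `(i, j + 1)` counts the segment `a_i ⋯ a_{j-1}`
    obtain ⟨u, hu, hM⟩ : ∃ u, segWord i j = u ++ [j] ∧
        parikhMatrix w i.castSucc j.castSucc = subwordCount w u := by
      rcases hij.eq_or_lt with rfl | hlt
      · refine ⟨[], segWord_self i, ?_⟩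
        rw [parikhMatrix_apply_self, subwordCount_nil, Nat.cast_one]
      · obtain ⟨k, hk⟩ := Fin.exists_succ_eq_of_ne_zero (x := j.castSucc) (by
          simpa [Fin.ext_iff] using (Nat.zero_le i.val).trans_lt hlt |>.ne')
        have hkj : j.val = k.val + 1 := by simpa [Fin.ext_iff] using hk.symm
        exact ⟨segWord i k, segWord_eq_append_singleton (by omega) hkj,
          by rw [← hk, ih (by omega)]⟩
    rw [parikhMatrix_append_singleton, mul_parikhLetter_apply, ih hij, hu,
      subwordCount_append_singleton, ← hu]
    simp only [Fin.succ_inj, Nat.cast_add]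
    split_ifs with hja
    · rw [← hja, hM]
    · rw [add_zero, Nat.cast_zero, add_zero]

end ParikhMatrix

/-- Theorem 3: the entries of the Parikh matrix `M = Ψ_Σ(w)` of a word `w` over
`{a_1 < ⋯ < a_s} = Fin s`: unit diagonal, zero below the diagonal, and
`M_{i,j+1} = |w|_{a_i a_{i+1} ⋯ a_j}` for `i ≤ j`. -/
theorem stmt_4 (s : ℕ) (w : List (Fin s)) :
    (∀ i : Fin (s + 1), parikhMatrix w i i = 1) ∧
    (∀ i j : Fin (s + 1), j < i → parikhMatrix w i j = 0) ∧
    (∀ i j : Fin s, i ≤ j →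
      parikhMatrix w i.castSucc j.succ = (subwordCount w (segWord i j) : ℚ)) :=
  ⟨parikhMatrix_apply_self w, fun _ _ => parikhMatrix_apply_of_lt w,
    fun _ _ => parikhMatrix_castSucc_succ w⟩
end

section
/- Let Σ = {a < b} be the binary ordered alphabet and w ∈ Σ*. Then the Parikh matrix of the circular word [w] is the 3×3 rational matrix with rows (1, |w|_a, |w|_a·|w|_b/2), (0, 1, |w|_b), (0, 0, 1). In particular, |[w]|_{ab} = |w|_a·|w|_b/2, so Ψ_Σ([w]) depends only on the Parikh vector (|w|_a, |w|_b) of w. -/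
/-!
For a binary word `u`, `Ψ(u)` has entries `|u|_a`, `|u|_b` and `|u|_ab`, and the first two are
the same for all `u ∈ [w]`, so only `|u|_ab` has to be averaged.
Splitting `w = xy` gives `|yx|_ab = |w|_ab + |w|_a |x|_b - |w|_b |x|_a`. Summed over the `n`
prefixes `x` of `w`, with `∑ |x|_c = |w|_{ca} + |w|_{cb}`, `|w|_{cc} = C(|w|_c, 2)` and
`|w|_ab + |w|_ba = |w|_a |w|_b`, this gives `n |w|_a |w|_b / 2`.
Each `u ↦ u.rotate i` permutes `[w]`, so summing this over all `u ∈ [w]` gives `n` times the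
sum of `|u|_ab` over `[w]`.
-/

namespace List

variable {α : Type*} [DecidableEq α]

lemma count_map_concat_sublists (w v : List α) (y z : α) :
    count (v ++ [z]) (w.sublists.map (· ++ [y])) = if y = z then subwordCount w v else 0 := by
  split_ifs with hyz
  · subst hyz
    exact count_map_of_injective _ _ (append_left_injective [y]) v
  · rw [count_eq_zero]
    simp [hyz]

lemma subwordCount_concat_concat (w v : List α) (y z : α) :
    subwordCount (w ++ [y]) (v ++ [z]) =
      subwordCount w (v ++ [z]) + if y = z then subwordCount w v else 0 := by
  rw [subwordCount, sublists_concat, count_append, count_map_concat_sublists]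
  rfl

lemma subwordCount_nil_right (w : List α) : subwordCount w [] = 1 := by
  induction w using reverseRecOn with
  | nil => rfl
  | append_singleton w y ih =>
    have hnil : [] ∉ w.sublists.map (· ++ [y]) := by simp
    rw [subwordCount, sublists_concat, count_append, count_eq_zero.mpr hnil, add_zero]
    exact ih

lemma subwordCount_singleton (w : List α) (x : α) : subwordCount w [x] = w.count x := by
  induction w using reverseRecOn with
  | nil => rfl
  | append_singleton w y ih =>
    rw [← nil_append [x], subwordCount_concat_concat, nil_append, ih, subwordCount_nil_right,
      count_append, count_singleton']

lemma subwordCount_pair_concat (w : List α) (x y z : α) :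
    subwordCount (w ++ [z]) [x, y] = subwordCount w [x, y] + if z = y then w.count x else 0 := by
  rw [← subwordCount_singleton]
  exact subwordCount_concat_concat w [x] z y

lemma subwordCount_pair_append (u v : List α) (x y : α) :
    subwordCount (u ++ v) [x, y] =
      subwordCount u [x, y] + subwordCount v [x, y] + u.count x * v.count y := by
  induction v using reverseRecOn with
  | nil => simp [subwordCount]
  | append_singleton v z ih =>
    rw [← append_assoc, subwordCount_pair_concat, subwordCount_pair_concat, ih, count_append,
      count_append, count_singleton']
    split_ifs <;> ring

lemma subwordCount_pair_self (w : List α) (x : α) :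
    subwordCount w [x, x] = (w.count x).choose 2 := by
  induction w using reverseRecOn with
  | nil => rfl
  | append_singleton w z ih =>
    rw [subwordCount_pair_concat, ih, count_append, count_singleton']
    split_ifs
    · rw [Nat.choose_succ_succ', Nat.choose_one_right, add_comm]
    · rfl

lemma subwordCount_pair_add_swap (w : List α) {x y : α} (hxy : x ≠ y) :
    subwordCount w [x, y] + subwordCount w [y, x] = w.count x * w.count y := by
  induction w using reverseRecOn with
  | nil => rfl
  | append_singleton w z ih =>
    rw [subwordCount_pair_concat, subwordCount_pair_concat, count_append, count_append,
      count_singleton', count_singleton']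
    by_cases hzx : z = x <;> by_cases hzy : z = y
    · exact absurd (hzx.symm.trans hzy) hxy
    all_goals simp only [hzx, hzy, hxy, hxy.symm, if_true, if_false]; nlinarith [ih]

lemma sum_range_count_take [Fintype α] (w : List α) (x : α) :
    ∑ i ∈ Finset.range w.length, (w.take i).count x = ∑ y, subwordCount w [x, y] := by
  induction w using reverseRecOn with
  | nil => simp [subwordCount]
  | append_singleton w z ih =>
    have hprefix : ∀ i ∈ Finset.range w.length,
        ((w ++ [z]).take i).count x = (w.take i).count x := fun i hi => by
      rw [take_append_of_le_length (Finset.mem_range.mp hi).le]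
    simp only [subwordCount_pair_concat, Finset.sum_add_distrib, Finset.sum_ite_eq,
      Finset.mem_univ, if_true, length_append, length_singleton, Finset.sum_range_succ, take_left]
    rw [Finset.sum_congr rfl hprefix, ih]

lemma subwordCount_rotate_add (w : List α) {i : ℕ} (hi : i ≤ w.length) (x y : α) :
    subwordCount (w.rotate i) [x, y] + (w.take i).count x * (w.drop i).count y =
      subwordCount w [x, y] + (w.drop i).count x * (w.take i).count y := by
  have hsplit := subwordCount_pair_append (w.take i) (w.drop i) x y
  rw [take_append_drop] at hsplit
  rw [rotate_eq_drop_append_take hi, subwordCount_pair_append, hsplit]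
  ring

end List

section ConjClass

variable {α : Type*} [DecidableEq α]

lemma card_conjClass_ne_zero (w : List α) : (conjClass w).card ≠ 0 :=
  Finset.card_ne_zero_of_mem (Finset.mem_insert_self _ _)

lemma mem_conjClass {w u : List α} : u ∈ conjClass w ↔ w ~r u := by
  simp only [conjClass, Finset.mem_insert, Finset.mem_image, Finset.mem_range]
  constructor
  · rintro (rfl | ⟨i, -, rfl⟩)
    · exact List.IsRotated.refl u
    · exact ⟨i, rfl⟩
  · intro h
    obtain ⟨i, hi, rfl⟩ := List.isRotated_iff_mod.mp h
    rcases hi.lt_or_eq with hi | rfl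
    · exact Or.inr ⟨i, hi, rfl⟩
    · exact Or.inl (List.rotate_length w)

lemma image_rotate_conjClass (w : List α) (i : ℕ) :
    (conjClass w).image (·.rotate i) = conjClass w := by
  refine Finset.eq_of_subset_of_card_le ?_ ?_
  · intro v hv
    obtain ⟨u, hu, rfl⟩ := Finset.mem_image.mp hv
    exact mem_conjClass.mpr ((mem_conjClass.mp hu).trans ⟨i, rfl⟩)
  · rw [Finset.card_image_of_injective _ (List.rotate_injective i)]

lemma length_nsmul_sum_conjClass {M : Type*} [AddCommMonoid M] (w : List α) (g : List α → M) :
    w.length • ∑ u ∈ conjClass w, g u =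
      ∑ u ∈ conjClass w, ∑ i ∈ Finset.range w.length, g (u.rotate i) := by
  have hshift (i : ℕ) : ∑ u ∈ conjClass w, g (u.rotate i) = ∑ u ∈ conjClass w, g u := by
    conv_rhs => rw [← image_rotate_conjClass w i]
    exact (Finset.sum_image fun u _ v _ huv => List.rotate_injective i huv).symm
  simp only [Finset.sum_comm (s := conjClass w), hshift, Finset.sum_const, Finset.card_range]

end ConjClass

section FinTwo

open List

lemma length_eq_count_zero_add_count_one (w : List (Fin 2)) :
    w.length = w.count 0 + w.count 1 := by
  induction w with
  | nil => rfl
  | cons x w ih => fin_cases x <;> simp [ih] <;> omega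

lemma parikhMatrix_fin_two (w : List (Fin 2)) :
    parikhMatrix w = !![1, (w.count 0 : ℚ), (subwordCount w [0, 1] : ℚ);
                        0, 1, (w.count 1 : ℚ);
                        0, 0, 1] := by
  induction w using reverseRecOn with
  | nil =>
    ext i j
    fin_cases i <;> fin_cases j <;> rfl
  | append_singleton w x ih =>
    rw [parikhMatrix, map_append, prod_append, ← parikhMatrix, ih, map_singleton, prod_singleton,
      subwordCount_pair_concat, count_append, count_append]
    ext i j
    fin_cases x <;> fin_cases i <;> fin_cases j <;>
      simp [Matrix.mul_apply, Fin.sum_univ_three, parikhLetter, Matrix.single_apply] <;> ring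

lemma sum_range_subwordCount_rotate (w : List (Fin 2)) :
    ∑ i ∈ Finset.range w.length, (subwordCount (w.rotate i) [0, 1] : ℚ) =
      w.length * w.count 0 * w.count 1 / 2 := by
  have hterm : ∀ i ∈ Finset.range w.length, (subwordCount (w.rotate i) [0, 1] : ℚ) =
      subwordCount w [0, 1] + w.count 0 * (w.take i).count 1 - w.count 1 * (w.take i).count 0 := by
    intro i hi
    have hrot := subwordCount_rotate_add w (Finset.mem_range.mp hi).le 0 1
    have hsplit (x : Fin 2) : (w.take i).count x + (w.drop i).count x = w.count x := by
      rw [← count_append, take_append_drop]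
    have h0 := hsplit 0
    have h1 := hsplit 1
    qify at hrot h0 h1
    rw [← h0, ← h1]
    linear_combination hrot
  have hprefix (x : Fin 2) : ∑ i ∈ Finset.range w.length, ((w.take i).count x : ℚ) =
      subwordCount w [x, 0] + subwordCount w [x, 1] := by
    have h := sum_range_count_take w x
    rw [Fin.sum_univ_two] at h
    exact_mod_cast h
  have hswap := subwordCount_pair_add_swap w (x := 0) (y := 1) (by decide)
  have hlen := length_eq_count_zero_add_count_one w
  have h00 := subwordCount_pair_self w 0
  have h11 := subwordCount_pair_self w 1
  qify at hswap hlen h00 h11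
  rw [Nat.cast_choose_two] at h00 h11
  rw [Finset.sum_congr rfl hterm, Finset.sum_sub_distrib, Finset.sum_add_distrib,
    ← Finset.mul_sum, ← Finset.mul_sum, hprefix, hprefix, Finset.sum_const, Finset.card_range,
    nsmul_eq_mul]
  linear_combination (subwordCount w [0, 1] - w.count 0 * w.count 1 / 2 : ℚ) * hlen +
    (w.count 0 : ℚ) * h11 - (w.count 1 : ℚ) * h00 + (w.count 0 : ℚ) * hswap

lemma circCount_zero_one (w : List (Fin 2)) :
    circCount w [0, 1] = (w.count 0 : ℚ) * (w.count 1 : ℚ) / 2 := by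
  rcases eq_or_ne w [] with rfl | hw
  · simp [circCount, conjClass, subwordCount]
  have hcard : ((conjClass w).card : ℚ) ≠ 0 := Nat.cast_ne_zero.mpr (card_conjClass_ne_zero w)
  have hlen : (w.length : ℚ) ≠ 0 := by simpa using hw
  have hrot : ∀ u ∈ conjClass w,
      ∑ i ∈ Finset.range w.length, (subwordCount (u.rotate i) [0, 1] : ℚ) =
        w.length * (w.count 0 * w.count 1 / 2) := by
    intro u hu
    have hperm := (mem_conjClass.mp hu).perm.symm
    rw [← hperm.length_eq, ← hperm.count_eq, ← hperm.count_eq, sum_range_subwordCount_rotate]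
    ring
  have hsum := length_nsmul_sum_conjClass w fun u => (subwordCount u [0, 1] : ℚ)
  rw [Finset.sum_congr rfl hrot, Finset.sum_const, nsmul_eq_mul, nsmul_eq_mul] at hsum
  rw [circCount, div_eq_iff hcard]
  apply mul_left_cancel₀ hlen
  linear_combination hsum

lemma circParikh_fin_two (w : List (Fin 2)) :
    circParikh w = !![1, (w.count 0 : ℚ), circCount w [0, 1];
                      0, 1, (w.count 1 : ℚ);
                      0, 0, 1] := by
  have hcard : ((conjClass w).card : ℚ) ≠ 0 := Nat.cast_ne_zero.mpr (card_conjClass_ne_zero w)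
  have hterm : ∀ u ∈ conjClass w, parikhMatrix u =
      !![1, (w.count 0 : ℚ), (subwordCount u [0, 1] : ℚ);
         0, 1, (w.count 1 : ℚ);
         0, 0, 1] := by
    intro u hu
    have hperm := (mem_conjClass.mp hu).perm
    rw [parikhMatrix_fin_two, hperm.count_eq, hperm.count_eq]
  rw [circParikh, Finset.sum_congr rfl hterm]
  ext i j
  fin_cases i <;> fin_cases j <;>
    simp [Matrix.sum_apply, circCount, hcard, div_eq_inv_mul]

end FinTwo

/-- Theorem 25: for a word `w` over `{a < b} = Fin 2` (with `a = 0`, `b = 1`), the Parikh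
matrix of the circular word `[w]` is the matrix with rows `(1, |w|_a, |w|_a|w|_b/2)`,
`(0, 1, |w|_b)`, `(0, 0, 1)`; in particular `|[w]|_{ab} = |w|_a|w|_b/2`, so `Ψ_Σ([w])`
depends only on the Parikh vector of `w`. -/
theorem stmt_11 (w : List (Fin 2)) :
    circParikh w =
      !![1, (w.count 0 : ℚ), (w.count 0 : ℚ) * (w.count 1 : ℚ) / 2;
         0, 1, (w.count 1 : ℚ);
         0, 0, 1] ∧
    circCount w [0, 1] = (w.count 0 : ℚ) * (w.count 1 : ℚ) / 2 := by
  rw [circParikh_fin_two, circCount_zero_one]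
  exact ⟨rfl, rfl⟩
end

section
/- Let Σ = {a < b} be the binary ordered alphabet and u, v ∈ Σ*. Then the Parikh matrices of the circular words [u] and [v] commute, i.e., Ψ_Σ([u])·Ψ_Σ([v]) = Ψ_Σ([v])·Ψ_Σ([u]), if and only if |u|_a·|v|_b = |v|_a·|u|_b. -/
/-!
The Parikh matrix of a binary word `w` is unitriangular with superdiagonal `(|w|_a, |w|_b)`.
These counts are invariant under cyclic shifts, so averaging over the circular word `[w]`
only averages the corner entry. For unitriangular `3 × 3` matrices with superdiagonals
`(p, q)` and `(p', q')` the two products differ only in the corner, by `p q' - p' q`.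
-/

def unitri3 (p q c : ℚ) : Matrix (Fin 3) (Fin 3) ℚ := !![1, p, c; 0, 1, q; 0, 0, 1]

lemma unitri3_mul (p q c p' q' c' : ℚ) :
    unitri3 p q c * unitri3 p' q' c' = unitri3 (p + p') (q + q') (c + c' + p * q') := by
  ext i j
  fin_cases i <;> fin_cases j <;>
    simp [unitri3, Matrix.mul_apply, Fin.sum_univ_three] <;> ring

@[simp]
lemma unitri3_apply_zero_two (p q c : ℚ) : unitri3 p q c 0 2 = c := rfl

lemma unitri3_inj {p q c p' q' c' : ℚ} :
    unitri3 p q c = unitri3 p' q' c' ↔ p = p' ∧ q = q' ∧ c = c' := by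
  refine ⟨fun h => ⟨?_, ?_, ?_⟩, fun ⟨hp, hq, hc⟩ => hp ▸ hq ▸ hc ▸ rfl⟩
  · simpa [unitri3] using congrFun (congrFun h 0) 1
  · simpa [unitri3] using congrFun (congrFun h 1) 2
  · simpa using congrFun (congrFun h 0) 2

lemma unitri3_commute_iff (p q c p' q' c' : ℚ) :
    unitri3 p q c * unitri3 p' q' c' = unitri3 p' q' c' * unitri3 p q c ↔ p * q' = p' * q := by
  rw [unitri3_mul, unitri3_mul, unitri3_inj]
  constructor
  · rintro ⟨-, -, hc⟩
    linarith
  · intro h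
    refine ⟨add_comm p p', add_comm q q', ?_⟩
    linarith

lemma one_eq_unitri3 : (1 : Matrix (Fin 3) (Fin 3) ℚ) = unitri3 0 0 0 := by
  ext i j
  fin_cases i <;> fin_cases j <;> simp [unitri3]

lemma parikhLetter_zero : parikhLetter (0 : Fin 2) = unitri3 1 0 0 := by
  ext i j
  fin_cases i <;> fin_cases j <;>
    simp [unitri3, parikhLetter, Matrix.single, Fin.ext_iff]

lemma parikhLetter_one : parikhLetter (1 : Fin 2) = unitri3 0 1 0 := by
  ext i j
  fin_cases i <;> fin_cases j <;>
    simp [unitri3, parikhLetter, Matrix.single, Fin.ext_iff]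

lemma parikhMatrix_cons {s : ℕ} (x : Fin s) (w : List (Fin s)) :
    parikhMatrix (x :: w) = parikhLetter x * parikhMatrix w := by
  simp [parikhMatrix]

lemma parikhMatrix_eq_unitri3 (w : List (Fin 2)) :
    parikhMatrix w = unitri3 (w.count 0) (w.count 1) (parikhMatrix w 0 2) := by
  induction w with
  | nil => simpa [parikhMatrix] using one_eq_unitri3
  | cons x w ih =>
    rw [parikhMatrix_cons, ih]
    match x with
    | 0 =>
      rw [parikhLetter_zero, unitri3_mul, unitri3_apply_zero_two, unitri3_inj]
      simp [add_comm]
    | 1 =>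
      rw [parikhLetter_one, unitri3_mul, unitri3_apply_zero_two, unitri3_inj]
      simp [add_comm]

lemma List.Perm.of_mem_conjClass {α : Type*} [DecidableEq α] {w x : List α}
    (hx : x ∈ conjClass w) : x.Perm w := by
  rcases Finset.mem_insert.mp hx with rfl | hx
  · exact List.Perm.refl x
  · obtain ⟨n, -, rfl⟩ := Finset.mem_image.mp hx
    exact List.rotate_perm w n

lemma inv_card_smul_sum_unitri3 {α : Type*} {S : Finset α} (hS : S.Nonempty) (p q : ℚ)
    (f : α → ℚ) :
    (S.card : ℚ)⁻¹ • ∑ x ∈ S, unitri3 p q (f x) =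
      unitri3 p q ((S.card : ℚ)⁻¹ * ∑ x ∈ S, f x) := by
  have hcard : (S.card : ℚ) ≠ 0 := by exact_mod_cast hS.card_pos.ne'
  ext i j
  rw [Matrix.smul_apply, Matrix.sum_apply]
  fin_cases i <;> fin_cases j <;>
    simp [unitri3, Finset.mul_sum, hcard]

lemma circParikh_eq_unitri3 (w : List (Fin 2)) :
    ∃ c, circParikh w = unitri3 (w.count 0) (w.count 1) c := by
  have hconj : ∀ x ∈ conjClass w,
      parikhMatrix x = unitri3 (w.count 0) (w.count 1) (parikhMatrix x 0 2) := by
    intro x hx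
    have hperm := List.Perm.of_mem_conjClass hx
    rw [← hperm.count_eq 0, ← hperm.count_eq 1]
    exact parikhMatrix_eq_unitri3 x
  rw [circParikh, Finset.sum_congr rfl hconj]
  exact ⟨_, inv_card_smul_sum_unitri3 (Finset.insert_nonempty _ _) _ _ _⟩

/-- Corollary 29: for words `u, v` over `{a < b} = Fin 2`, the Parikh matrices of the
circular words `[u]` and `[v]` commute if and only if `|u|_a|v|_b = |v|_a|u|_b`
(the weak ratio property). -/
theorem stmt_14 (u v : List (Fin 2)) :
    circParikh u * circParikh v = circParikh v * circParikh u ↔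
      u.count 0 * v.count 1 = v.count 0 * u.count 1 := by
  obtain ⟨c, hc⟩ := circParikh_eq_unitri3 u
  obtain ⟨c', hc'⟩ := circParikh_eq_unitri3 v
  rw [hc, hc', unitri3_commute_iff]
  exact_mod_cast Iff.rfl
end
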